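/- arXiv:1308.3451 — 5 statements merged into one kernel-verified Lean document; each statement's English description precedes it below -/
import Mathlib

section
/- If every A-congruence on the term algebra T is finitely generated, then every A-algebra B is A-equationally noetherian in n variables. -/
/-! The equations of `T` that hold on a set `V ⊆ Bⁿ` form a congruence, and an `A`-congruence
when `V` is nonempty. If no finite part of a system `S` is inconsistent in `B`, the equations
holding on `V_B(S₀)` for some finite `S₀ ⊆ S` therefore form a directed union of `A`-congruences,
hence an `A`-congruence. Being finitely generated, it is already attained at one finite `S₀`,
and since it contains `S` this gives `V_B(S₀) ⊆ V_B(S)`. -/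

open FirstOrder FirstOrder.Language

universe u v w x

/-- An algebraic language: a first-order language with no relation symbols. -/
def IsAlgebraicLanguage (L : FirstOrder.Language.{u, w}) : Prop :=
  ∀ m : ℕ, IsEmpty (L.Relations m)

/-- Interpretation in `B` of the constant symbol attached to `a : A`. -/
def constMap (L : FirstOrder.Language.{u, w}) (A : Type v) (B : Type x)
    [L[[A]].Structure B] (a : A) : B :=
  Structure.funMap (L.con a) (fun i : Fin 0 => i.elim0)

/-- `B` is an `A`-algebra: the interpretation-of-constants map `A → B` is injective and
commutes with all `L`-function symbols (i.e. it is an `L`-embedding of `A` into `B`). -/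
def IsAAlgebra (L : FirstOrder.Language.{u, w}) (A : Type v) [L.Structure A]
    (B : Type x) [L[[A]].Structure B] : Prop :=
  Function.Injective (constMap L A B) ∧
    ∀ (m : ℕ) (f : L.Functions m) (a : Fin m → A),
      constMap L A B (Structure.funMap f a) =
        Structure.funMap ((L.lhomWithConstants A).onFunction f)
          (fun i => constMap L A B (a i))

/-- The algebraic set `V_B(S)` of a system of equations `S`. -/
def eqnSet (L : FirstOrder.Language.{u, w}) (A : Type v) (B : Type x)
    [L[[A]].Structure B] {n : ℕ}
    (S : Set (L[[A]].Term (Fin n) × L[[A]].Term (Fin n))) : Set (Fin n → B) :=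
  { b | ∀ pq ∈ S, Term.realize b pq.1 = Term.realize b pq.2 }

/-- `B` is `A`-equationally noetherian in `n` variables. -/
def EqNoetherian (L : FirstOrder.Language.{u, w}) (A : Type v) (B : Type x)
    [L[[A]].Structure B] (n : ℕ) : Prop :=
  ∀ S : Set (L[[A]].Term (Fin n) × L[[A]].Term (Fin n)),
    ∃ S₀ ⊆ S, S₀.Finite ∧ eqnSet L A B S = eqnSet L A B S₀

/-- A congruence on the term algebra `T_{L(A)}(x₁, …, xₙ)`. -/
def IsCongruence (L : FirstOrder.Language.{u, w}) (A : Type v) {n : ℕ}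
    (R : L[[A]].Term (Fin n) → L[[A]].Term (Fin n) → Prop) : Prop :=
  Equivalence R ∧
    ∀ (m : ℕ) (f : L[[A]].Functions m) (p q : Fin m → L[[A]].Term (Fin n)),
      (∀ i, R (p i) (q i)) → R (Term.func f p) (Term.func f q)

/-- An `A`-congruence: a congruence relating no two constant terms coming from
distinct elements of `A`. -/
def IsACongruence (L : FirstOrder.Language.{u, w}) (A : Type v) {n : ℕ}
    (R : L[[A]].Term (Fin n) → L[[A]].Term (Fin n) → Prop) : Prop :=
  IsCongruence L A R ∧
    ∀ a₁ a₂ : A, R ((L.con a₁).term) ((L.con a₂).term) → a₁ = a₂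

/-- The congruence generated by a set `S` of pairs of terms. -/
def congGen (L : FirstOrder.Language.{u, w}) (A : Type v) {n : ℕ}
    (S : Set (L[[A]].Term (Fin n) × L[[A]].Term (Fin n))) :
    L[[A]].Term (Fin n) → L[[A]].Term (Fin n) → Prop :=
  fun p q => ∀ R : L[[A]].Term (Fin n) → L[[A]].Term (Fin n) → Prop,
    IsCongruence L A R → (∀ x ∈ S, R x.1 x.2) → R p q

/-- `A` contains a trivial (one-element) subalgebra. -/
def HasTrivialSubalgebra (L : FirstOrder.Language.{u, w}) (A : Type v)
    [L.Structure A] : Prop :=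
  ∃ e : A, ∀ (m : ℕ) (f : L.Functions m), Structure.funMap f (fun _ : Fin m => e) = e

section Congruence

variable {L : FirstOrder.Language.{u, w}} {A : Type v} {n : ℕ}

theorem isACongruence_iUnion_of_directed {ι : Type*} [Nonempty ι]
    {R : ι → L[[A]].Term (Fin n) → L[[A]].Term (Fin n) → Prop} (hdir : Directed (· ≤ ·) R)
    (hR : ∀ i, IsACongruence L A (R i)) :
    IsACongruence L A (fun p q => ∃ i, R i p q) := by
  refine ⟨⟨⟨fun p => ?_, fun ⟨i, h⟩ => ⟨i, (hR i).1.1.symm h⟩, ?_⟩, ?_⟩, ?_⟩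
  · obtain ⟨i⟩ := ‹Nonempty ι›
    exact ⟨i, (hR i).1.1.refl p⟩
  · rintro p q r ⟨i, hpq⟩ ⟨j, hqr⟩
    obtain ⟨k, hik, hjk⟩ := hdir i j
    exact ⟨k, (hR k).1.1.trans (hik _ _ hpq) (hjk _ _ hqr)⟩
  · intro m f p q hpq
    choose i hi using hpq
    obtain ⟨k, hk⟩ := hdir.finite_le i
    exact ⟨k, (hR k).1.2 m f p q fun j => hk j _ _ (hi j)⟩
  · rintro a₁ a₂ ⟨i, h⟩
    exact (hR i).2 a₁ a₂ h

theorem exists_forall_le_of_iUnion_eq_congGen {ι : Type*} [Nonempty ι]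
    {R : ι → L[[A]].Term (Fin n) → L[[A]].Term (Fin n) → Prop} (hdir : Directed (· ≤ ·) R)
    (hR : ∀ i, IsCongruence L A (R i)) {T : Set (L[[A]].Term (Fin n) × L[[A]].Term (Fin n))}
    (hT : T.Finite) (hRT : (fun p q => ∃ i, R i p q) = congGen L A T) :
    ∃ k, ∀ i, R i ≤ R k := by
  have hmem : ∀ p q, (∃ i, R i p q) ↔ congGen L A T p q := fun p q => by rw [← hRT]
  have hgen : ∀ t ∈ T, ∃ i, R i t.1 t.2 := fun t ht =>
    (hmem _ _).2 fun _ _ hR' => hR' t ht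
  choose i hi using hgen
  have := hT.to_subtype
  obtain ⟨k, hk⟩ := hdir.finite_le (fun t : T => i t t.2)
  exact ⟨k, fun j p q hpq =>
    (hmem p q).1 ⟨j, hpq⟩ (R k) (hR k) fun t ht => hk ⟨t, ht⟩ _ _ (hi t ht)⟩

end Congruence

section EquationsOnASet

variable {L : FirstOrder.Language.{u, w}} {A : Type v} {B : Type x} [L[[A]].Structure B] {n : ℕ}

variable (L A) in
def eqnsOn (V : Set (Fin n → B)) : L[[A]].Term (Fin n) → L[[A]].Term (Fin n) → Prop :=
  fun p q => ∀ b ∈ V, p.realize b = q.realize b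

theorem eqnsOn_anti {V W : Set (Fin n → B)} (hVW : V ⊆ W) : eqnsOn L A W ≤ eqnsOn L A V :=
  fun _ _ h b hb => h b (hVW hb)

theorem subset_eqnSet_iff {V : Set (Fin n → B)}
    {S : Set (L[[A]].Term (Fin n) × L[[A]].Term (Fin n))} :
    V ⊆ eqnSet L A B S ↔ ∀ pq ∈ S, eqnsOn L A V pq.1 pq.2 :=
  ⟨fun h pq hpq _ hb => h hb pq hpq, fun h b hb pq hpq => h pq hpq b hb⟩

theorem eqnSet_anti {S₀ S : Set (L[[A]].Term (Fin n) × L[[A]].Term (Fin n))} (h : S₀ ⊆ S) :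
    eqnSet L A B S ⊆ eqnSet L A B S₀ :=
  fun _ hb pq hpq => hb pq (h hpq)

theorem realize_con_term (a : A) (b : Fin n → B) :
    ((L.con a).term : L[[A]].Term (Fin n)).realize b = constMap L A B a :=
  congrArg (Structure.funMap (L := L[[A]]) (L.con a)) (funext fun i => i.elim0)

theorem isCongruence_eqnsOn (V : Set (Fin n → B)) : IsCongruence L A (eqnsOn L A V) := by
  refine ⟨⟨fun _ _ _ => rfl, fun h b hb => (h b hb).symm,
    fun h₁ h₂ b hb => (h₁ b hb).trans (h₂ b hb)⟩, ?_⟩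
  intro m f p q hpq b hb
  simp only [Term.realize_func]
  exact congrArg _ (funext fun i => hpq i b hb)

theorem isACongruence_eqnsOn (hA : Function.Injective (constMap L A B))
    {V : Set (Fin n → B)} (hV : V.Nonempty) : IsACongruence L A (eqnsOn L A V) := by
  refine ⟨isCongruence_eqnsOn V, fun a₁ a₂ h => hA ?_⟩
  obtain ⟨b, hb⟩ := hV
  simpa only [realize_con_term] using h b hb

end EquationsOnASet

theorem eq_noetherian_of_fg_congruences_general
    {L : FirstOrder.Language.{u, w}} {A : Type v} [L.Structure A]
    (n : ℕ)
    (hfg : ∀ R : L[[A]].Term (Fin n) → L[[A]].Term (Fin n) → Prop,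
      IsACongruence L A R →
        ∃ S : Set (L[[A]].Term (Fin n) × L[[A]].Term (Fin n)),
          S.Finite ∧ R = congGen L A S)
    (B : Type x) [L[[A]].Structure B] (hB : IsAAlgebra L A B) :
    EqNoetherian L A B n := by
  intro S
  let ι := {S₀ // S₀ ⊆ S ∧ S₀.Finite}
  by_cases hinconsistent : ∃ S₀ : ι, eqnSet L A B S₀.1 = ∅
  · obtain ⟨⟨S₀, hS₀S, hS₀⟩, hV⟩ := hinconsistent
    exact ⟨S₀, hS₀S, hS₀, (Set.subset_empty_iff.1 (hV ▸ eqnSet_anti hS₀S)).trans hV.symm⟩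
  have : Nonempty ι := ⟨⟨∅, Set.empty_subset S, Set.finite_empty⟩⟩
  let R : ι → L[[A]].Term (Fin n) → L[[A]].Term (Fin n) → Prop :=
    fun S₀ => eqnsOn L A (eqnSet L A B S₀.1)
  have hdir : Directed (· ≤ ·) R := fun S₁ S₂ =>
    ⟨⟨S₁.1 ∪ S₂.1, Set.union_subset S₁.2.1 S₂.2.1, S₁.2.2.union S₂.2.2⟩,
      eqnsOn_anti (eqnSet_anti Set.subset_union_left),
      eqnsOn_anti (eqnSet_anti Set.subset_union_right)⟩
  obtain ⟨T, hT, hRT⟩ := hfg _ (isACongruence_iUnion_of_directed hdir fun S₀ =>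
    isACongruence_eqnsOn hB.1 (Set.nonempty_iff_ne_empty.2 (not_exists.1 hinconsistent S₀)))
  obtain ⟨S₀, hS₀⟩ := exists_forall_le_of_iUnion_eq_congGen hdir
    (fun _ => isCongruence_eqnsOn _) hT hRT
  refine ⟨S₀.1, S₀.2.1, S₀.2.2, (eqnSet_anti S₀.2.1).antisymm (subset_eqnSet_iff.2 ?_)⟩
  intro pq hpq
  exact hS₀ ⟨{pq}, Set.singleton_subset_iff.2 hpq, Set.finite_singleton pq⟩ _ _
    fun _ hb => hb pq rfl

/-- If every `A`-congruence on the term algebra is finitely generated,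
then every `A`-algebra `B` is `A`-equationally noetherian in `n` variables. -/
theorem eq_noetherian_of_fg_congruences
    {L : FirstOrder.Language.{u, w}} {A : Type v} [L.Structure A]
    (hL : IsAlgebraicLanguage L) (n : ℕ)
    (hfg : ∀ R : L[[A]].Term (Fin n) → L[[A]].Term (Fin n) → Prop,
      IsACongruence L A R →
        ∃ S : Set (L[[A]].Term (Fin n) × L[[A]].Term (Fin n)),
          S.Finite ∧ R = congGen L A S)
    (B : Type x) [L[[A]].Structure B] (hB : IsAAlgebra L A B) :
    EqNoetherian L A B n :=
  eq_noetherian_of_fg_congruences_general n hfg B hB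
end

section
/- Suppose every A-separating normal subgroup N of G = A ∗ F_n (that is, every normal subgroup with N ∩ A = 1) is the normal closure of a finite subset of G. Then for every group B, every injective group homomorphism j : A → B, and every subset W ⊆ G, there exists a finite subset W₀ ⊆ W such that V_B(W) = V_B(W₀). -/
open Monoid

universe u v

/-
The solutions of a system `W` in `B` only depend on the normal closure `⟨⟨W⟩⟩` of `W`, and a
normal closure is the union of the normal closures of the finite subsets of `W`. If `⟨⟨W⟩⟩` is
`A`-separating, it is the normal closure of a finite set, which already lies in `⟨⟨W₀⟩⟩` for some
finite `W₀ ⊆ W`; so `⟨⟨W₀⟩⟩ = ⟨⟨W⟩⟩`. Otherwise `⟨⟨W₀⟩⟩` contains some `a ≠ 1` of `A` for a finite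
`W₀ ⊆ W`, and since `j` is injective neither `W₀` nor `W` has a solution in `B`.
-/

namespace Subgroup

variable {G : Type*} [Group G]

theorem exists_finite_subset_mem_normalClosure {W : Set G} {g : G}
    (hg : g ∈ normalClosure W) : ∃ T ⊆ W, T.Finite ∧ g ∈ normalClosure T := by
  induction hg using closure_induction with
  | mem x hx =>
    obtain ⟨a, ha, hconj⟩ := Group.mem_conjugatesOfSet_iff.1 hx
    exact ⟨{a}, Set.singleton_subset_iff.2 ha, Set.finite_singleton a,
      conjugatesOfSet_subset_normalClosure (Group.mem_conjugatesOfSet_iff.2 ⟨a, rfl, hconj⟩)⟩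
  | one => exact ⟨∅, Set.empty_subset _, Set.finite_empty, one_mem _⟩
  | mul x y _ _ hx hy =>
    obtain ⟨T₁, hT₁W, hT₁, hxT₁⟩ := hx
    obtain ⟨T₂, hT₂W, hT₂, hyT₂⟩ := hy
    exact ⟨T₁ ∪ T₂, Set.union_subset hT₁W hT₂W, hT₁.union hT₂,
      mul_mem (normalClosure_mono Set.subset_union_left hxT₁)
        (normalClosure_mono Set.subset_union_right hyT₂)⟩
  | inv x _ hx =>
    obtain ⟨T, hTW, hT, hxT⟩ := hx
    exact ⟨T, hTW, hT, inv_mem hxT⟩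

theorem exists_finite_subset_subset_normalClosure {W s : Set G} (hs : s.Finite)
    (hsW : s ⊆ normalClosure W) : ∃ T ⊆ W, T.Finite ∧ s ⊆ normalClosure T := by
  choose! T hTW hT hgT using fun g (hg : g ∈ s) => exists_finite_subset_mem_normalClosure (hsW hg)
  exact ⟨⋃ g ∈ s, T g, Set.iUnion₂_subset hTW, hs.biUnion hT,
    fun g hg => normalClosure_mono (Set.subset_iUnion₂ g hg) (hgT g hg)⟩

theorem exists_finite_subset_normalClosure_eq {W s : Set G} (hs : s.Finite)
    (hWs : normalClosure W = normalClosure s) :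
    ∃ T ⊆ W, T.Finite ∧ normalClosure T = normalClosure W := by
  obtain ⟨T, hTW, hT, hsT⟩ :=
    exists_finite_subset_subset_normalClosure hs (hWs.symm ▸ subset_normalClosure)
  exact ⟨T, hTW, hT,
    le_antisymm (normalClosure_mono hTW) (hWs ▸ normalClosure_le_normal hsT)⟩

end Subgroup

namespace MonoidHom

variable {G H : Type*} [Group G] [Group H]

theorem forall_mem_eq_one_iff_of_normalClosure_eq (f : G →* H) {T W : Set G}
    (hTW : Subgroup.normalClosure T = Subgroup.normalClosure W) :
    (∀ w ∈ T, f w = 1) ↔ ∀ w ∈ W, f w = 1 := by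
  change T ⊆ f.ker ↔ W ⊆ f.ker
  rw [Subgroup.normalClosure_subset_iff, Subgroup.normalClosure_subset_iff, hTW]

theorem eq_one_of_mem_normalClosure (f : G →* H) {T : Set G} (hT : ∀ w ∈ T, f w = 1) {g : G}
    (hg : g ∈ Subgroup.normalClosure T) : f g = 1 :=
  Subgroup.normalClosure_le_normal (N := f.ker) hT hg

end MonoidHom

theorem Coprod.not_forall_lift_eq_one_of_inl_mem_normalClosure {M N B : Type*} [Group M]
    [Group N] [Group B] {j : M →* B} (hj : Function.Injective j) (f : N →* B) {T : Set (Coprod M N)}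
    {a : M} (ha : a ≠ 1) (haT : Coprod.inl a ∈ Subgroup.normalClosure T) :
    ¬ ∀ w ∈ T, Coprod.lift j f w = 1 := fun hT =>
  ha <| hj <| by simpa using (Coprod.lift j f).eq_one_of_mem_normalClosure hT haT

/-- If every `A`-separating normal subgroup of `G = A ∗ Fₙ` is the
normal closure of a finite subset, then for every group `B`, every injective
homomorphism `j : A → B` and every system `W ⊆ G` of equations, there is a finite
subsystem `W₀ ⊆ W` with `V_B(W) = V_B(W₀)`. -/
theorem eq_noetherian_of_fg_separating_normal_subgroups
    {A : Type u} [Group A] (n : ℕ)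
    (h : ∀ N : Subgroup (Coprod A (FreeGroup (Fin n))), N.Normal →
      (∀ a : A, Coprod.inl a ∈ N → a = 1) →
      ∃ s : Set (Coprod A (FreeGroup (Fin n))),
        s.Finite ∧ N = Subgroup.normalClosure s) :
    ∀ (B : Type v) [Group B] (j : A →* B), Function.Injective j →
      ∀ W : Set (Coprod A (FreeGroup (Fin n))),
        ∃ W₀ ⊆ W, W₀.Finite ∧
          { b : Fin n → B | ∀ w ∈ W, Coprod.lift j (FreeGroup.lift b) w = 1 } =
          { b : Fin n → B | ∀ w ∈ W₀, Coprod.lift j (FreeGroup.lift b) w = 1 } := by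
  intro B _ j hj W
  by_cases hsep : ∀ a : A, Coprod.inl a ∈ Subgroup.normalClosure W → a = 1
  · obtain ⟨s, hs, hWs⟩ := h _ inferInstance hsep
    obtain ⟨T, hTW, hT, hclosure⟩ := Subgroup.exists_finite_subset_normalClosure_eq hs hWs
    exact ⟨T, hTW, hT, Set.ext fun b =>
      ((Coprod.lift j (FreeGroup.lift b)).forall_mem_eq_one_iff_of_normalClosure_eq hclosure).symm⟩
  · push Not at hsep
    obtain ⟨a, haW, ha⟩ := hsep
    obtain ⟨T, hTW, hT, haT⟩ := Subgroup.exists_finite_subset_mem_normalClosure haW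
    have hT_unsolvable (b : Fin n → B) :=
      Coprod.not_forall_lift_eq_one_of_inl_mem_normalClosure hj (FreeGroup.lift b) ha haT
    exact ⟨T, hTW, hT, Set.ext fun b => iff_of_false
      (fun hb => hT_unsolvable b fun w hw => hb w (hTW hw)) (hT_unsolvable b)⟩
end

section
/- Suppose that for every group B, every injective group homomorphism j : A → B, and every subset W ⊆ G = A ∗ F_n, there exists a finite subset W₀ ⊆ W with V_B(W) = V_B(W₀). Then there is no strictly increasing sequence N₀ ⊊ N₁ ⊊ N₂ ⊊ ⋯ of A-separating normal subgroups of G. -/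
/-!
Amalgamate all the quotients `G ⧸ N i` over their common copy of `A`. Since `A` embeds in each
factor, `A` and every factor embed in the amalgamated product `B`. Let `W = ⋃ i, N i` and let
`W₀ ⊆ W` be a finite subsystem with the same solutions in `B`; then `W₀ ⊆ N k` for some `k`.
The projection `G → G ⧸ N k → B` is `φ_b` for some `b`, and `b` solves `W₀` but not
`N (k + 1) \ N k`, because its kernel is exactly `N k`.
-/

open Monoid

universe u v w

theorem Monoid.Coprod.lift_comp_inl_freeGroupLift {A B ι : Type*} [Group A] [Group B]
    (ψ : Coprod A (FreeGroup ι) →* B) :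
    Coprod.lift (ψ.comp Coprod.inl) (FreeGroup.lift fun i => ψ (Coprod.inr (FreeGroup.of i))) =
      ψ :=
  (Coprod.lift_unique rfl (FreeGroup.lift.apply_symm_apply (ψ.comp Coprod.inr)).symm).symm

theorem exists_injective_and_forall_exists_ker_eq {ι : Type v} {A : Type u} {G : Type w}
    [Group A] [Group G] (f : A →* G) (N : ι → Subgroup G) [∀ i, (N i).Normal]
    (hN : ∀ i, Function.Injective ((QuotientGroup.mk' (N i)).comp f)) :
    ∃ (B : Type max v u w) (_ : Group B) (j : A →* B), Function.Injective j ∧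
      ∀ i, ∃ ψ : G →* B, ψ.comp f = j ∧ ψ.ker = N i := by
  refine ⟨PushoutI fun i => (QuotientGroup.mk' (N i)).comp f, inferInstance, PushoutI.base _,
    PushoutI.base_injective hN, fun i => ⟨(PushoutI.of i).comp (QuotientGroup.mk' (N i)),
    PushoutI.of_comp_eq_base i, ?_⟩⟩
  rw [MonoidHom.ker_comp_of_injective _ _ (PushoutI.of_injective hN i), QuotientGroup.ker_mk']

/-- If for every group `B`, every injective homomorphism `j : A → B`
and every system `W ⊆ G = A ∗ Fₙ` of equations there is a finite subsystem `W₀ ⊆ W`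
with `V_B(W) = V_B(W₀)`, then there is no strictly increasing sequence of
`A`-separating normal subgroups of `G`. -/
theorem no_strict_chain_of_separating_normal_subgroups
    {A : Type u} [Group A] (n : ℕ)
    (h : ∀ (B : Type u) [Group B] (j : A →* B), Function.Injective j →
      ∀ W : Set (Coprod A (FreeGroup (Fin n))),
        ∃ W₀ ⊆ W, W₀.Finite ∧
          { b : Fin n → B | ∀ w ∈ W, Coprod.lift j (FreeGroup.lift b) w = 1 } =
          { b : Fin n → B | ∀ w ∈ W₀, Coprod.lift j (FreeGroup.lift b) w = 1 }) :
    ¬ ∃ N : ℕ → Subgroup (Coprod A (FreeGroup (Fin n))),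
        (∀ i, (N i).Normal) ∧
        (∀ i, ∀ a : A, Coprod.inl a ∈ N i → a = 1) ∧
        (∀ i, N i < N (i + 1)) := by
  rintro ⟨N, hnorm, hsep, hlt⟩
  have hinj (i : ℕ) : Function.Injective ((QuotientGroup.mk' (N i)).comp Coprod.inl) :=
    (injective_iff_map_eq_one _).2 fun a ha => hsep i a ((QuotientGroup.eq_one_iff _).1 ha)
  obtain ⟨B, _, j, hj, hψ⟩ := exists_injective_and_forall_exists_ker_eq Coprod.inl N hinj
  obtain ⟨W₀, hW₀, hfin, hV⟩ := h B j hj (⋃ i, (N i : Set _))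
  obtain ⟨k, hk⟩ : ∃ k, W₀ ⊆ N k := by
    have hdir : Directed (· ⊆ ·) fun i => (N i : Set (Coprod A (FreeGroup (Fin n)))) :=
      (SetLike.coe_mono.comp (monotone_nat_of_le_succ fun i => (hlt i).le)).directed_le
    simpa using hdir.exists_mem_subset_of_finset_subset_biUnion (s := hfin.toFinset) (by simpa)
  obtain ⟨ψ, rfl, hker⟩ := hψ k
  obtain ⟨w, hw, hwk⟩ := SetLike.exists_of_lt (hlt k)
  have hsol : (fun i => ψ (Coprod.inr (FreeGroup.of i))) ∈
      { b : Fin n → B | ∀ w ∈ W₀, Coprod.lift (ψ.comp Coprod.inl) (FreeGroup.lift b) w = 1 } :=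
    fun w hw => by rw [Coprod.lift_comp_inl_freeGroupLift, ← MonoidHom.mem_ker, hker]; exact hk hw
  rw [← hV] at hsol
  have hψw := hsol w (Set.mem_iUnion.2 ⟨k + 1, hw⟩)
  rw [Coprod.lift_comp_inl_freeGroupLift, ← MonoidHom.mem_ker, hker] at hψw
  exact hwk hψw
end

section
/- Let A be a noetherian commutative ring. Then every commutative ring B equipped with an injective ring homomorphism f : A → B is A-equationally noetherian: for every n : ℕ and every set S of pairs of polynomials in A[x₁, …, xₙ], there exists a finite subset S₀ ⊆ S such that V_B(S) = V_B(S₀). -/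
universe u v

open MvPolynomial

theorem Ideal.exists_finite_subset_span_eq {R : Type*} [CommRing R] [IsNoetherianRing R]
    (s : Set R) : ∃ t ⊆ s, t.Finite ∧ Ideal.span t = Ideal.span s := by
  obtain ⟨t, hts, hspan⟩ :=
    (Submodule.fg_span_iff_fg_span_finset_subset s).1 (IsNoetherian.noetherian (Ideal.span s))
  exact ⟨t, hts, t.finite_toSet, hspan.symm⟩

theorem RingHom.forall_map_eq_iff_span_sub_le_ker {R S : Type*} [CommRing R] [CommRing S]
    (ψ : R →+* S) (s : Set (R × R)) :
    (∀ pq ∈ s, ψ pq.1 = ψ pq.2) ↔ Ideal.span ((fun pq => pq.1 - pq.2) '' s) ≤ RingHom.ker ψ := by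
  simp only [Ideal.span_le, Set.subset_def, Set.forall_mem_image, SetLike.mem_coe,
    RingHom.mem_ker, map_sub, sub_eq_zero]

/-- If `A` is a noetherian commutative ring, then every commutative
ring `B` equipped with an injective ring homomorphism `f : A → B` is `A`-equationally
noetherian: every system of polynomial equations over `A` in `n` variables is
equivalent over `B` to a finite subsystem. -/
theorem commRing_eq_noetherian
    {A : Type u} [CommRing A] [IsNoetherianRing A] :
    ∀ (B : Type v) [CommRing B] (f : A →+* B), Function.Injective f →
      ∀ (n : ℕ)
        (S : Set (MvPolynomial (Fin n) A × MvPolynomial (Fin n) A)),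
        ∃ S₀ ⊆ S, S₀.Finite ∧
          { b : Fin n → B | ∀ pq ∈ S,
              MvPolynomial.eval₂ f b pq.1 = MvPolynomial.eval₂ f b pq.2 } =
          { b : Fin n → B | ∀ pq ∈ S₀,
              MvPolynomial.eval₂ f b pq.1 = MvPolynomial.eval₂ f b pq.2 } := by
  intro B _ f _ n S
  -- `V_B(S)` only depends on the ideal spanned by the differences `p - q`, and that ideal is
  -- finitely generated by Hilbert's basis theorem (found by instance search).
  obtain ⟨S₀, hS₀, hfin, hspan⟩ := Set.exists_subset_image_finite_and.1
    (Ideal.exists_finite_subset_span_eq ((fun pq => pq.1 - pq.2) '' S))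
  refine ⟨S₀, hS₀, hfin, Set.ext fun b => ?_⟩
  simp only [Set.mem_ofPred_eq, ← coe_eval₂Hom,
    RingHom.forall_map_eq_iff_span_sub_le_ker, hspan]
end

section
/- Let A be a finitely generated abelian group, B an abelian group, and f : A → B an injective group homomorphism. Then B is A-equationally noetherian: for every n : ℕ and every set S of equations with coefficients in A in n variables, there exists a finite subset S₀ ⊆ S such that the set of common solutions of S₀ in B equals the set of common solutions of S in B. -/
universe u v

/-!
For fixed `b`, the equation `(c, a)` holds at `b` iff the linear map
`(c, a) ↦ ∑ i, c i • b i - f a` kills it, so the common solutions of `S` depend only on the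
submodule spanned by `S`. As `ℤⁿ × A` is a noetherian `ℤ`-module, that submodule is spanned by
a finite subset of `S`.
-/

open Submodule

section Equations

variable {R A B ι : Type*} [Ring R] [AddCommGroup A] [Module R A] [AddCommGroup B] [Module R B]
  [Fintype ι]

def solutionSet (f : A →ₗ[R] B) (S : Set ((ι → R) × A)) : Set (ι → B) :=
  {b | ∀ ca ∈ S, ∑ i, ca.1 i • b i = f ca.2}

def equationDefect (f : A →ₗ[R] B) (b : ι → B) : (ι → R) × A →ₗ[R] B :=
  (Fintype.linearCombination R b).comp (LinearMap.fst R _ _) - f.comp (LinearMap.snd R _ _)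

theorem equationDefect_apply (f : A →ₗ[R] B) (b : ι → B) (ca : (ι → R) × A) :
    equationDefect f b ca = ∑ i, ca.1 i • b i - f ca.2 := by
  simp [equationDefect, Fintype.linearCombination_apply]

theorem mem_solutionSet_iff_span_le_ker (f : A →ₗ[R] B) (S : Set ((ι → R) × A)) (b : ι → B) :
    b ∈ solutionSet f S ↔ span R S ≤ LinearMap.ker (equationDefect f b) := by
  simp only [span_le, Set.subset_def, SetLike.mem_coe, LinearMap.mem_ker, equationDefect_apply,
    sub_eq_zero]
  rfl

theorem solutionSet_eq_of_span_eq (f : A →ₗ[R] B) {S₀ S : Set ((ι → R) × A)}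
    (h : span R S₀ = span R S) : solutionSet f S₀ = solutionSet f S := by
  ext b
  rw [mem_solutionSet_iff_span_le_ker, mem_solutionSet_iff_span_le_ker, h]

end Equations

theorem IsNoetherian.exists_finite_subset_span_eq (R : Type*) {M : Type*} [Semiring R]
    [AddCommMonoid M] [Module R M] [IsNoetherian R M] (S : Set M) :
    ∃ S₀ ⊆ S, S₀.Finite ∧ span R S₀ = span R S := by
  obtain ⟨S₀, hS₀S, hspan⟩ :=
    (fg_span_iff_fg_span_finset_subset S).1 (IsNoetherian.noetherian (span R S))
  exact ⟨S₀, hS₀S, S₀.finite_toSet, hspan.symm⟩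

theorem fg_abelian_eq_noetherian_general
    {A : Type u} [AddCommGroup A] (hA : AddGroup.FG A)
    {B : Type v} [AddCommGroup B] (f : A →+ B)
    (n : ℕ) (S : Set ((Fin n → ℤ) × A)) :
    ∃ S₀ ⊆ S, S₀.Finite ∧
      { b : Fin n → B | ∀ ca ∈ S₀, ∑ i, ca.1 i • b i = f ca.2 } =
      { b : Fin n → B | ∀ ca ∈ S, ∑ i, ca.1 i • b i = f ca.2 } := by
  have : Module.Finite ℤ A := Module.Finite.iff_addGroup_fg.2 hA
  obtain ⟨S₀, hS₀S, hS₀, hspan⟩ := IsNoetherian.exists_finite_subset_span_eq ℤ S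
  exact ⟨S₀, hS₀S, hS₀, solutionSet_eq_of_span_eq f.toIntLinearMap hspan⟩

/-- If `A` is a finitely generated abelian group, `B` an abelian group
and `f : A → B` an injective homomorphism, then `B` is `A`-equationally noetherian:
every system of equations with coefficients in `A` in `n` variables is equivalent
over `B` to a finite subsystem. -/
theorem fg_abelian_eq_noetherian
    {A : Type u} [AddCommGroup A] (hA : AddGroup.FG A)
    {B : Type v} [AddCommGroup B] (f : A →+ B) (hf : Function.Injective f)
    (n : ℕ) (S : Set ((Fin n → ℤ) × A)) :
    ∃ S₀ ⊆ S, S₀.Finite ∧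
      { b : Fin n → B | ∀ ca ∈ S₀, ∑ i, ca.1 i • b i = f ca.2 } =
      { b : Fin n → B | ∀ ca ∈ S, ∑ i, ca.1 i • b i = f ca.2 } :=
  fg_abelian_eq_noetherian_general hA f n S
end
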